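/- For every positive integer n and every ρ > 0, the improper integral ∫_ρ^∞ J₁(x)/x^{2n+1} dx equals (1/(4n²−1))·[2n·J₁(ρ)/ρ^{2n} + J₁′(ρ)/ρ^{2n−1} − ∫_ρ^∞ J₁(x)/x^{2n−1} dx]. -/

import Mathlib

/-!
Differentiating the power series of `J_ν` termwise gives Bessel's equation
`x² J'' + x J' + (x² - ν²) J = 0`. In Liouville normal form `u = √x · J_ν` it reads
`u'' = ((ν² - 1/4) / x² - 1) u`, and for `ν ≥ 1` the energy `(u² + u'²) · exp ((ν² - 1/4) / x)`
is nonincreasing, so `J_ν` and `J_ν'` are `O(x^{-1/2})`. By Bessel's equation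
`-(m J_ν / x^m + J_ν' / x^(m-1))` is an antiderivative of `(m² - ν²) J_ν / x^(m+1) + J_ν / x^(m-1)`;
integrating it over `(ρ, ∞)` with `ν = 1`, `m = 2n` gives the recursion.
-/

open Real MeasureTheory Filter

/-- Bessel function of the first kind of nonnegative integer order. -/
noncomputable def besselJ (n : ℕ) (x : ℝ) : ℝ :=
  ∑' k : ℕ, (-1 : ℝ) ^ k / (Nat.factorial k * Nat.factorial (n + k)) * (x / 2) ^ (2 * k + n)

/-- Struve function of nonnegative integer order. -/
noncomputable def struveH (n : ℕ) (x : ℝ) : ℝ :=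
  ∑' k : ℕ, (-1 : ℝ) ^ k /
    (Real.Gamma (k + 3 / 2) * Real.Gamma (k + n + 3 / 2)) * (x / 2) ^ (2 * k + n + 1)

open Topology

noncomputable def besselJCoeff (n k : ℕ) : ℝ := (-1 : ℝ) ^ k / (k.factorial * (n + k).factorial)

noncomputable def besselJTerm (n j k : ℕ) (x : ℝ) : ℝ :=
  besselJCoeff n k * ((2 * k + n).descFactorial j / 2 ^ j) * (x / 2) ^ (2 * k + n - j)

-- the series of `besselJ n` differentiated termwise `j` times
noncomputable def besselJSeries (n j : ℕ) (x : ℝ) : ℝ := ∑' k, besselJTerm n j k x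

lemma besselJ_eq_besselJSeries_zero (n : ℕ) : besselJ n = besselJSeries n 0 := by
  ext x
  simp [besselJ, besselJSeries, besselJTerm, besselJCoeff]

lemma hasDerivAt_besselJTerm (n j k : ℕ) (x : ℝ) :
    HasDerivAt (besselJTerm n j k) (besselJTerm n (j + 1) k x) x := by
  have h : HasDerivAt (fun y : ℝ => (y / 2) ^ (2 * k + n - j))
      ((2 * k + n - j : ℕ) * (x / 2) ^ (2 * k + n - j - 1) * (1 / 2)) x :=
    ((hasDerivAt_id x).div_const 2).pow _
  refine (h.const_mul (besselJCoeff n k * ((2 * k + n).descFactorial j / 2 ^ j))).congr_deriv ?_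
  simp only [besselJTerm, Nat.descFactorial_succ, Nat.sub_sub, Nat.cast_mul]
  ring

lemma summable_pow_mul_pow_div_factorial (n j : ℕ) {M : ℝ} (hM : 0 ≤ M) :
    Summable fun k : ℕ => ((2 * k + n : ℕ) : ℝ) ^ j * M ^ (2 * k + n) / k.factorial := by
  refine .of_nonneg_of_le (fun k => by positivity) (fun k => ?_)
    ((Real.summable_pow_div_factorial ((2 ^ j * M) ^ 2)).mul_left ((2 ^ j * M) ^ n))
  have h : ((2 * k + n : ℕ) : ℝ) ^ j ≤ (2 ^ j) ^ (2 * k + n) := by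
    rw [← pow_mul, mul_comm j, pow_mul]
    exact pow_le_pow_left₀ (by positivity) (by exact_mod_cast Nat.lt_two_pow_self.le) j
  calc ((2 * k + n : ℕ) : ℝ) ^ j * M ^ (2 * k + n) / k.factorial
      ≤ (2 ^ j) ^ (2 * k + n) * M ^ (2 * k + n) / k.factorial := by gcongr
    _ = (2 ^ j * M) ^ n * (((2 ^ j * M) ^ 2) ^ k / k.factorial) := by ring

lemma norm_besselJTerm_le (n j k : ℕ) {x R : ℝ} (hR : 2 ≤ R) (hx : |x| ≤ R) :
    ‖besselJTerm n j k x‖ ≤ ((2 * k + n : ℕ) : ℝ) ^ j * (R / 2) ^ (2 * k + n) / k.factorial := by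
  have hc : |besselJCoeff n k| ≤ 1 / k.factorial := by
    rw [besselJCoeff, abs_div, abs_pow, abs_neg, abs_one, one_pow, abs_of_pos (by positivity)]
    gcongr
    exact le_mul_of_one_le_right (by positivity) (by exact_mod_cast (n + k).factorial_pos)
  have hD : ((2 * k + n).descFactorial j : ℝ) / 2 ^ j ≤ ((2 * k + n : ℕ) : ℝ) ^ j :=
    (div_le_self (by positivity) (one_le_pow₀ one_le_two)).trans
      (by exact_mod_cast Nat.descFactorial_le_pow _ _)
  have hy : |x / 2| ^ (2 * k + n - j) ≤ (R / 2) ^ (2 * k + n) := by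
    calc |x / 2| ^ (2 * k + n - j) ≤ (R / 2) ^ (2 * k + n - j) := by
          rw [abs_div, abs_two]; gcongr
      _ ≤ (R / 2) ^ (2 * k + n) := pow_le_pow_right₀ (by linarith) (Nat.sub_le _ _)
  rw [besselJTerm, Real.norm_eq_abs, abs_mul, abs_mul, abs_pow,
    abs_of_nonneg (by positivity : (0 : ℝ) ≤ (2 * k + n).descFactorial j / 2 ^ j)]
  calc _ ≤ 1 / k.factorial * ((2 * k + n : ℕ) : ℝ) ^ j * (R / 2) ^ (2 * k + n) := by gcongr
    _ = _ := by ring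

lemma summable_besselJTerm (n j : ℕ) (x : ℝ) : Summable fun k => besselJTerm n j k x :=
  .of_norm_bounded (summable_pow_mul_pow_div_factorial n j (by positivity : 0 ≤ (|x| + 2) / 2))
    fun k => norm_besselJTerm_le n j k (by linarith [abs_nonneg x]) (by linarith)

lemma hasDerivAt_besselJSeries (n j : ℕ) (x : ℝ) :
    HasDerivAt (besselJSeries n j) (besselJSeries n (j + 1) x) x := by
  set R := |x| + 2
  have hx : x ∈ Set.Ioo (-R) R := abs_lt.1 (by linarith)
  exact hasDerivAt_tsum_of_isPreconnected
    (summable_pow_mul_pow_div_factorial n (j + 1) (by positivity : 0 ≤ R / 2)) isOpen_Ioo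
    isPreconnected_Ioo (fun k y _ => hasDerivAt_besselJTerm n j k y)
    (fun k y hy => norm_besselJTerm_le n (j + 1) k (by linarith [abs_nonneg x])
      (abs_le.2 ⟨hy.1.le, hy.2.le⟩)) hx (summable_besselJTerm n j x) hx

lemma deriv_besselJSeries (n j : ℕ) : deriv (besselJSeries n j) = besselJSeries n (j + 1) :=
  funext fun x => (hasDerivAt_besselJSeries n j x).deriv

lemma descFactorial_mul_pow_sub_mul_pow {R : Type*} [CommSemiring R] (m j : ℕ) (y : R) :
    (m.descFactorial j : R) * y ^ (m - j) * y ^ j = m.descFactorial j * y ^ m := by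
  rcases le_or_gt j m with hjm | hmj
  · rw [mul_assoc, pow_sub_mul_pow y hjm]
  · simp [Nat.descFactorial_eq_zero_iff_lt.2 hmj]

lemma besselJTerm_mul_pow (n j k : ℕ) (x : ℝ) :
    besselJTerm n j k x * (x / 2) ^ j = besselJCoeff n k *
      (2 * k + n).descFactorial j / 2 ^ j * (x / 2) ^ (2 * k + n) := by
  have h := descFactorial_mul_pow_sub_mul_pow (2 * k + n) j (x / 2)
  rw [besselJTerm]
  linear_combination besselJCoeff n k / 2 ^ j * h

lemma succ_mul_mul_besselJCoeff_succ (n k : ℕ) :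
    ((k : ℝ) + 1) * (n + k + 1) * besselJCoeff n (k + 1) = -besselJCoeff n k := by
  rw [besselJCoeff, besselJCoeff, ← add_assoc, Nat.factorial_succ, Nat.factorial_succ (n + k)]
  push_cast
  field_simp
  ring

lemma besselJSeries_ode (n : ℕ) (x : ℝ) :
    x ^ 2 * besselJSeries n 2 x + x * besselJSeries n 1 x + (x ^ 2 - n ^ 2) * besselJSeries n 0 x
      = 0 := by
  set a : ℕ → ℝ := fun k =>
    4 * k * (n + k) * besselJCoeff n k * (x / 2) ^ (2 * k + n)
  -- `a k` collects the terms of degree `2 k + n`; the series telescopes since `x²·J_n = -∑ a (k+1)`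
  have key : ∀ k, x ^ 2 * besselJTerm n 2 k x + x * besselJTerm n 1 k x
      - n ^ 2 * besselJTerm n 0 k x = a k ∧ x ^ 2 * besselJTerm n 0 k x = -a (k + 1) := by
    intro k
    have h2 := besselJTerm_mul_pow n 2 k x
    have h1 := besselJTerm_mul_pow n 1 k x
    have h0 := besselJTerm_mul_pow n 0 k x
    have hc := succ_mul_mul_besselJCoeff_succ n k
    simp only [Nat.cast_descFactorial_two, Nat.descFactorial_one, Nat.descFactorial_zero,
      Nat.cast_one, pow_zero, pow_one, mul_one, div_one] at h2 h1 h0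
    simp only [a, show 2 * (k + 1) + n = 2 * k + n + 2 by ring]
    push_cast at h2 h1 ⊢
    constructor
    · linear_combination 4 * h2 + 2 * h1 - n ^ 2 * h0
    · linear_combination x ^ 2 * h0 + 4 * (x / 2) ^ (2 * k + n + 2) * hc
  have hA : HasSum a (x ^ 2 * besselJSeries n 2 x + x * besselJSeries n 1 x
      - n ^ 2 * besselJSeries n 0 x) := by
    rw [show a = _ from funext fun k => ((key k).1).symm]
    exact (((summable_besselJTerm n 2 x).hasSum.mul_left (x ^ 2)).add
      ((summable_besselJTerm n 1 x).hasSum.mul_left x)).sub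
      ((summable_besselJTerm n 0 x).hasSum.mul_left ((n : ℝ) ^ 2))
  have hB : HasSum (fun k => a (k + 1)) (-(x ^ 2 * besselJSeries n 0 x)) := by
    rw [show (fun k => a (k + 1)) = _ from funext fun k => (neg_eq_iff_eq_neg.2 (key k).2).symm]
    exact ((summable_besselJTerm n 0 x).hasSum.mul_left (x ^ 2)).neg
  have h := hA.unique ((hasSum_nat_add_iff 1).1 hB)
  simp only [Finset.range_one, Finset.sum_singleton, a] at h
  linear_combination h

lemma hasDerivAt_besselJ (n : ℕ) (x : ℝ) : HasDerivAt (besselJ n) (deriv (besselJ n) x) x := by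
  rw [besselJ_eq_besselJSeries_zero, deriv_besselJSeries]
  exact hasDerivAt_besselJSeries n 0 x

lemma hasDerivAt_deriv_besselJ (n : ℕ) (x : ℝ) :
    HasDerivAt (deriv (besselJ n)) (deriv (deriv (besselJ n)) x) x := by
  rw [besselJ_eq_besselJSeries_zero, deriv_besselJSeries, deriv_besselJSeries]
  exact hasDerivAt_besselJSeries n 1 x

theorem besselJ_ode (n : ℕ) (x : ℝ) :
    x ^ 2 * deriv (deriv (besselJ n)) x + x * deriv (besselJ n) x + (x ^ 2 - n ^ 2) * besselJ n x
      = 0 := by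
  rw [besselJ_eq_besselJSeries_zero, deriv_besselJSeries, deriv_besselJSeries]
  exact besselJSeries_ode n x

/-- The energy `(u² + u'²) · exp (q / x)` of a solution of `u'' = (q / x² - 1) u` is nonincreasing
when `q ≥ 0`, since its derivative is `-(q / x²) exp (q / x) (u - u')²`. -/
lemma sq_add_sq_le_of_hasDerivAt {u v : ℝ → ℝ} {q a : ℝ} (hq : 0 ≤ q) (ha : 0 < a)
    (hu : ∀ x, a ≤ x → HasDerivAt u (v x) x)
    (hv : ∀ x, a ≤ x → HasDerivAt v ((q / x ^ 2 - 1) * u x) x) {x : ℝ} (hx : a ≤ x) :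
    u x ^ 2 + v x ^ 2 ≤ (u a ^ 2 + v a ^ 2) * exp (q / a) := by
  set E : ℝ → ℝ := fun y => (u y ^ 2 + v y ^ 2) * exp (q / y)
  have hE : ∀ y, a ≤ y → HasDerivAt E (-(q / y ^ 2 * exp (q / y) * (u y - v y) ^ 2)) y := by
    intro y hy
    have hy0 : y ≠ 0 := (ha.trans_le hy).ne'
    have hexp : HasDerivAt (fun y => exp (q / y)) (exp (q / y) * -(q / y ^ 2)) y := by
      simpa only [div_eq_mul_inv, mul_neg] using ((hasDerivAt_inv hy0).const_mul q).exp
    refine ((((hu y hy).pow 2).add ((hv y hy).pow 2)).mul hexp).congr_deriv ?_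
    simp only [Pi.add_apply, Pi.pow_apply]
    field_simp
    ring
  have hanti : AntitoneOn E (Set.Ici a) := by
    refine antitoneOn_of_deriv_nonpos (convex_Ici a)
      (fun y hy => (hE y hy).continuousAt.continuousWithinAt)
      (fun y hy => (hE y (interior_subset hy)).differentiableAt.differentiableWithinAt)
      (fun y hy => ?_)
    rw [(hE y (interior_subset hy)).deriv, neg_nonpos]
    positivity
  calc u x ^ 2 + v x ^ 2 ≤ E x :=
        le_mul_of_one_le_right (by positivity)
          (one_le_exp (div_nonneg hq (ha.le.trans hx)))
    _ ≤ E a := hanti Set.self_mem_Ici hx hx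

lemma hasDerivAt_sqrt_mul_besselJ (n : ℕ) {x : ℝ} (hx : 0 < x) :
    HasDerivAt (fun y => √y * besselJ n y)
      (besselJ n x / (2 * √x) + √x * deriv (besselJ n) x) x := by
  refine ((hasDerivAt_sqrt hx.ne').mul (hasDerivAt_besselJ n x)).congr_deriv ?_
  ring

lemma hasDerivAt_deriv_sqrt_mul_besselJ (n : ℕ) {x : ℝ} (hx : 0 < x) :
    HasDerivAt (fun y => besselJ n y / (2 * √y) + √y * deriv (besselJ n) y)
      (((n ^ 2 - 1 / 4) / x ^ 2 - 1) * (√x * besselJ n x)) x := by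
  have h := ((hasDerivAt_besselJ n x).div ((hasDerivAt_sqrt hx.ne').const_mul 2)
    (by positivity)).add ((hasDerivAt_sqrt hx.ne').mul (hasDerivAt_deriv_besselJ n x))
  refine h.congr_deriv ?_
  have hode := besselJ_ode n x
  obtain ⟨s, hs, rfl⟩ : ∃ s, 0 < s ∧ s ^ 2 = x := ⟨√x, sqrt_pos.2 hx, sq_sqrt hx.le⟩
  simp only [sqrt_sq hs.le] at hode ⊢
  field_simp
  linear_combination 16 * hode

lemma exists_abs_besselJ_le {n : ℕ} (hn : 1 ≤ n) {a : ℝ} (ha : 0 < a) :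
    ∃ C, ∀ x, a ≤ x → |besselJ n x| ≤ C / √x ∧ |deriv (besselJ n) x| ≤ C / √x := by
  set u : ℝ → ℝ := fun y => √y * besselJ n y
  set v : ℝ → ℝ := fun y => besselJ n y / (2 * √y) + √y * deriv (besselJ n) y
  set B := √((u a ^ 2 + v a ^ 2) * exp ((n ^ 2 - 1 / 4) / a))
  have hq : (0 : ℝ) ≤ n ^ 2 - 1 / 4 := by
    have : (1 : ℝ) ≤ n := by exact_mod_cast hn
    nlinarith
  refine ⟨B + B / (2 * a), fun x hx => ?_⟩
  have hx0 : 0 < x := ha.trans_le hx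
  have hs : 0 < √x := sqrt_pos.2 hx0
  have hsq : u x ^ 2 + v x ^ 2 ≤ (u a ^ 2 + v a ^ 2) * exp ((n ^ 2 - 1 / 4) / a) :=
    sq_add_sq_le_of_hasDerivAt hq ha
      (fun y hy => hasDerivAt_sqrt_mul_besselJ n (ha.trans_le hy))
      (fun y hy => hasDerivAt_deriv_sqrt_mul_besselJ n (ha.trans_le hy)) hx
  have hu : |u x| ≤ B := abs_le_sqrt (by nlinarith [sq_nonneg (v x)])
  have hv : |v x| ≤ B := abs_le_sqrt (by nlinarith [sq_nonneg (u x)])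
  have hB : 0 ≤ B / (2 * a) := by positivity
  have hJ : besselJ n x = u x / √x := by
    simp only [u]
    field_simp
  have hJ' : deriv (besselJ n) x = (v x - u x / (2 * x)) / √x := by
    simp only [u, v]
    obtain ⟨s, hs', rfl⟩ : ∃ s, 0 < s ∧ s ^ 2 = x := ⟨√x, hs, sq_sqrt hx0.le⟩
    rw [sqrt_sq hs'.le]
    field_simp
    ring
  rw [hJ, hJ', abs_div, abs_div, abs_of_pos hs]
  constructor
  · gcongr
    linarith
  · gcongr
    calc |v x - u x / (2 * x)| ≤ |v x| + |u x| / (2 * x) := by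
          refine (abs_sub _ _).trans_eq ?_
          rw [abs_div, abs_of_pos (by positivity : 0 < 2 * x)]
      _ ≤ B + B / (2 * a) := by gcongr

lemma abs_div_pow_le_mul_rpow {y C x : ℝ} (hx : 0 < x) (hy : |y| ≤ C / √x) (m : ℕ) :
    |y / x ^ m| ≤ C * x ^ (-((m : ℝ) + 1 / 2)) := by
  rw [abs_div, abs_of_pos (pow_pos hx m), rpow_neg hx.le, rpow_add hx, rpow_natCast,
    ← sqrt_eq_rpow, ← div_eq_mul_inv, mul_comm, ← div_div]
  gcongr

lemma integrableOn_Ioi_div_pow_of_abs_le {f : ℝ → ℝ} {C ρ : ℝ} (hρ : 0 < ρ)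
    (hf : ContinuousOn f (Set.Ioi ρ)) (hC : ∀ x ∈ Set.Ioi ρ, |f x| ≤ C / √x) {m : ℕ}
    (hm : 1 ≤ m) : IntegrableOn (fun x => f x / x ^ m) (Set.Ioi ρ) := by
  have hint : IntegrableOn (fun x => C * x ^ (-((m : ℝ) + 1 / 2))) (Set.Ioi ρ) :=
    (integrableOn_Ioi_rpow_of_lt (by linarith [(by exact_mod_cast hm : (1 : ℝ) ≤ m)]) hρ).const_mul C
  refine hint.mono' ((hf.div (continuous_pow m).continuousOn
    fun x hx => pow_ne_zero m (hρ.trans hx).ne').aestronglyMeasurable measurableSet_Ioi) ?_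
  exact ae_restrict_of_forall_mem measurableSet_Ioi fun x hx =>
    abs_div_pow_le_mul_rpow (hρ.trans hx) (hC x hx) m

lemma tendsto_div_pow_atTop_of_abs_le {f : ℝ → ℝ} {C a : ℝ}
    (hC : ∀ x, a ≤ x → |f x| ≤ C / √x) (m : ℕ) :
    Tendsto (fun x => f x / x ^ m) atTop (𝓝 0) := by
  have hdecay := (tendsto_rpow_neg_atTop (y := (m : ℝ) + 1 / 2) (by positivity)).const_mul C
  rw [mul_zero] at hdecay
  refine squeeze_zero_norm' ?_ hdecay
  filter_upwards [eventually_gt_atTop 0, eventually_ge_atTop a] with x hx hax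
  exact abs_div_pow_le_mul_rpow hx (hC x hax) m

lemma hasDerivAt_besselJ_div_pow (n k : ℕ) {x : ℝ} (hx : x ≠ 0) :
    HasDerivAt (fun y => -((k + 1) * (besselJ n y / y ^ (k + 1)) + deriv (besselJ n) y / y ^ k))
      (((k + 1) ^ 2 - n ^ 2) * (besselJ n x / x ^ (k + 2)) + besselJ n x / x ^ k) x := by
  have h := ((((hasDerivAt_besselJ n x).div (hasDerivAt_pow (k + 1) x)
    (pow_ne_zero _ hx)).const_mul ((k : ℝ) + 1)).add
    ((hasDerivAt_deriv_besselJ n x).div (hasDerivAt_pow k x) (pow_ne_zero _ hx))).neg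
  have hpow : (k : ℝ) * x ^ (k - 1) = k * x ^ k / x := by
    rcases k with _ | k
    · simp
    · rw [Nat.add_sub_cancel, pow_succ, mul_div_assoc, mul_div_cancel_right₀ _ hx]
  refine h.congr_deriv ?_
  have hode := besselJ_ode n x
  rw [hpow, Nat.add_sub_cancel]
  push_cast
  field_simp
  linear_combination -x ^ (3 * k + 3) * hode

lemma integral_Ioi_besselJ_div_pow {n k : ℕ} (hn : 1 ≤ n) (hk : 1 ≤ k) {ρ : ℝ} (hρ : 0 < ρ) :
    ((k + 1) ^ 2 - n ^ 2) * (∫ x in Set.Ioi ρ, besselJ n x / x ^ (k + 2))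
      + ∫ x in Set.Ioi ρ, besselJ n x / x ^ k
      = (k + 1) * (besselJ n ρ / ρ ^ (k + 1)) + deriv (besselJ n) ρ / ρ ^ k := by
  obtain ⟨C, hC⟩ := exists_abs_besselJ_le hn hρ
  have hcont : ContinuousOn (besselJ n) (Set.Ioi ρ) :=
    fun x _ => (hasDerivAt_besselJ n x).continuousAt.continuousWithinAt
  have hJ : ∀ x ∈ Set.Ioi ρ, |besselJ n x| ≤ C / √x := fun x hx => (hC x (le_of_lt hx)).1
  have hint_k2 := integrableOn_Ioi_div_pow_of_abs_le hρ hcont hJ (m := k + 2) (by omega)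
  have hint_k := integrableOn_Ioi_div_pow_of_abs_le hρ hcont hJ hk
  have hlim : Tendsto (fun y => -((k + 1) * (besselJ n y / y ^ (k + 1))
      + deriv (besselJ n) y / y ^ k)) atTop (𝓝 0) := by
    simpa using (((tendsto_div_pow_atTop_of_abs_le (fun x hx => (hC x hx).1) (k + 1)).const_mul
      ((k : ℝ) + 1)).add (tendsto_div_pow_atTop_of_abs_le (fun x hx => (hC x hx).2) k)).neg
  have h := integral_Ioi_of_hasDerivAt_of_tendsto
    (hasDerivAt_besselJ_div_pow n k hρ.ne').continuousAt.continuousWithinAt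
    (fun x hx => hasDerivAt_besselJ_div_pow n k (hρ.trans hx).ne')
    ((hint_k2.const_mul _).add hint_k) hlim
  rw [integral_add (hint_k2.const_mul _) hint_k, integral_const_mul] at h
  linear_combination h

theorem stmt_4 (n : ℕ) (hn : 0 < n) (ρ : ℝ) (hρ : 0 < ρ) :
    ∫ x in Set.Ioi ρ, besselJ 1 x / x ^ (2 * n + 1) =
      (1 / (4 * (n : ℝ) ^ 2 - 1)) *
        (2 * n * besselJ 1 ρ / ρ ^ (2 * n) + deriv (besselJ 1) ρ / ρ ^ (2 * n - 1)
          - ∫ x in Set.Ioi ρ, besselJ 1 x / x ^ (2 * n - 1)) := by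
  obtain ⟨k, hk⟩ : ∃ k, 2 * n - 1 = k := ⟨_, rfl⟩
  have h2n : 2 * n = k + 1 := by omega
  have h := integral_Ioi_besselJ_div_pow le_rfl (by omega : 1 ≤ k) hρ
  rw [hk, show 2 * n + 1 = k + 2 by omega, h2n]
  have hk' : (k : ℝ) + 1 = 2 * n := by exact_mod_cast h2n.symm
  have hne : 4 * (n : ℝ) ^ 2 - 1 ≠ 0 := by
    have : (1 : ℝ) ≤ n := by exact_mod_cast hn
    nlinarith
  rw [hk', Nat.cast_one] at h
  rw [eq_comm, one_div, inv_mul_eq_iff_eq_mul₀ hne]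
  linear_combination -h
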